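/- arXiv:2203.07937 — 8 statements merged into one kernel-verified Lean document; each statement's English description precedes it below -/
import Mathlib

section
/- Fix ε > 0. For each directed edge (u,v) ∈ Ē define θ(u,v) = ε·√A(u,v) / (Σ_{(x,y)∈Ē} √A(x,y)). Then: (i) Σ_{(u,v)∈Ē} θ(u,v) = ε; (ii) Σ_{(u,v)∈Ē} (1−α)·A(u,v) / (α·‖A‖₁·θ(u,v)) = (1−α)/(α·ε·‖A‖₁) · (Σ_{(u,v)∈Ē} √A(u,v))²; and (iii) this choice is optimal: for every function θ' : Ē → ℝ with θ'(u,v) > 0 for all (u,v) ∈ Ē and Σ_{(u,v)∈Ē} θ'(u,v) ≤ ε, one has Σ_{(u,v)∈Ē} (1−α)·A(u,v)/(α·‖A‖₁·θ'(u,v)) ≥ (1−α)/(α·ε·‖A‖₁)·(Σ_{(u,v)∈Ē} √A(u,v))². -/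
open Finset

/-!
Up to the factor `(1 - α) / (α ‖A‖₁)` the cost is `∑ A / θ'`. Cauchy–Schwarz in Sedrakyan's form,
`(∑ √A)² / ∑ θ' ≤ ∑ (√A)² / θ'`, bounds it below by `(∑ √A)² / ε` for every admissible `θ'`, and
thresholds proportional to `√A` turn Cauchy–Schwarz into an equality.
-/

namespace Finset

variable {ι 𝕜 : Type*} [Field 𝕜] {s : Finset ι}

theorem sum_mul_div_sum_self (c : 𝕜) {w : ι → 𝕜} (hw : ∑ i ∈ s, w i ≠ 0) :
    ∑ i ∈ s, c * w i / ∑ j ∈ s, w j = c := by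
  rw [← sum_div, ← mul_sum, mul_div_cancel_right₀ _ hw]

theorem sum_sq_div_mul_div_sum_self {c : 𝕜} (hc : c ≠ 0) {w : ι → 𝕜} (hw : ∀ i ∈ s, w i ≠ 0) :
    ∑ i ∈ s, w i ^ 2 / (c * w i / ∑ j ∈ s, w j) = (∑ i ∈ s, w i) ^ 2 / c := by
  have hterm : ∀ i ∈ s, w i ^ 2 / (c * w i / ∑ j ∈ s, w j) = w i * (∑ j ∈ s, w j) / c := by
    intro i hi
    have hwi := hw i hi
    rw [div_div_eq_mul_div]
    field_simp
  rw [sum_congr rfl hterm, ← sum_div, ← sum_mul, sq]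

theorem sq_sum_div_le_sum_sq_div_of_sum_le [LinearOrder 𝕜] [IsStrictOrderedRing 𝕜]
    (w : ι → 𝕜) {t : ι → 𝕜} {ε : 𝕜} (ht : ∀ i ∈ s, 0 < t i) (hsum : ∑ i ∈ s, t i ≤ ε) :
    (∑ i ∈ s, w i) ^ 2 / ε ≤ ∑ i ∈ s, w i ^ 2 / t i := by
  rcases s.eq_empty_or_nonempty with rfl | hs
  · simp
  calc (∑ i ∈ s, w i) ^ 2 / ε ≤ (∑ i ∈ s, w i) ^ 2 / ∑ i ∈ s, t i :=
        div_le_div_of_nonneg_left (sq_nonneg _) (sum_pos ht hs) hsum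
    _ ≤ ∑ i ∈ s, w i ^ 2 / t i := sq_sum_div_le_sum_sq_div s w ht

end Finset

theorem edgepush_l1_threshold_optimal_general
    {V : Type*} [Fintype V] [Nonempty V]
    (A : V → V → ℝ)
    (hdeg : ∀ u : V, 0 < ∑ v, A u v)
    (α : ℝ) (hα : α ∈ Set.Ioo (0 : ℝ) 1)
    (ε : ℝ) (hε : 0 < ε)
    (Ebar : Finset (V × V))
    (hE : Ebar = Finset.univ.filter fun p : V × V => 0 < A p.1 p.2)
    (normA : ℝ) (hnormA : normA = ∑ u, ∑ v, A u v)
    (θ : V × V → ℝ)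
    (hθ : ∀ p ∈ Ebar,
      θ p = ε * Real.sqrt (A p.1 p.2) / ∑ q ∈ Ebar, Real.sqrt (A q.1 q.2)) :
    (∑ p ∈ Ebar, θ p = ε) ∧
    (∑ p ∈ Ebar, (1 - α) * A p.1 p.2 / (α * normA * θ p)
      = (1 - α) / (α * ε * normA) * (∑ p ∈ Ebar, Real.sqrt (A p.1 p.2)) ^ 2) ∧
    (∀ θ' : V × V → ℝ, (∀ p ∈ Ebar, 0 < θ' p) → (∑ p ∈ Ebar, θ' p) ≤ ε →
      (1 - α) / (α * ε * normA) * (∑ p ∈ Ebar, Real.sqrt (A p.1 p.2)) ^ 2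
        ≤ ∑ p ∈ Ebar, (1 - α) * A p.1 p.2 / (α * normA * θ' p)) := by
  obtain ⟨hα0, hα1⟩ := hα
  have hA : ∀ p ∈ Ebar, 0 < A p.1 p.2 := fun p hp => (mem_filter.mp (hE ▸ hp :)).2
  have hEne : Ebar.Nonempty := by
    obtain ⟨u⟩ := ‹Nonempty V›
    obtain ⟨v, -, hv⟩ := exists_lt_of_sum_lt (f := fun _ : V => (0 : ℝ)) (g := A u)
      (by simpa using hdeg u)
    exact ⟨(u, v), by simp [hE, hv]⟩
  have hS : 0 < ∑ p ∈ Ebar, √(A p.1 p.2) :=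
    sum_pos (fun p hp => Real.sqrt_pos.mpr (hA p hp)) hEne
  have hnormA : 0 < normA := hnormA ▸ sum_pos (fun u _ => hdeg u) univ_nonempty
  have hcost : ∀ t : V × V → ℝ, ∑ p ∈ Ebar, (1 - α) * A p.1 p.2 / (α * normA * t p)
      = (1 - α) / (α * normA) * ∑ p ∈ Ebar, √(A p.1 p.2) ^ 2 / t p := fun t => by
    rw [mul_sum]
    refine sum_congr rfl fun p hp => ?_
    rw [Real.sq_sqrt (hA p hp).le, mul_div_mul_comm]
  have hconst : (1 - α) / (α * ε * normA) * (∑ p ∈ Ebar, √(A p.1 p.2)) ^ 2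
      = (1 - α) / (α * normA) * ((∑ p ∈ Ebar, √(A p.1 p.2)) ^ 2 / ε) := by ring
  refine ⟨?_, ?_, fun θ' hθ'pos hθ'sum => ?_⟩
  · rw [sum_congr rfl hθ, sum_mul_div_sum_self ε hS.ne']
  · rw [hcost, hconst, sum_congr rfl fun p hp => by rw [hθ p hp],
      sum_sq_div_mul_div_sum_self hε.ne' fun p hp => (Real.sqrt_pos.mpr (hA p hp)).ne']
  · rw [hcost, hconst]
    have hscale : 0 ≤ (1 - α) / (α * normA) := div_nonneg (by linarith) (by positivity)
    exact mul_le_mul_of_nonneg_left (sq_sum_div_le_sum_sq_div_of_sum_le _ hθ'pos hθ'sum) hscale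

/-- **EdgePush optimal thresholds for ℓ1-error** (Theorem 5.3 / optimality of θ(u,v)).
With θ(u,v) = ε·√A(u,v) / Σ_{(x,y)∈Ē} √A(x,y): (i) the thresholds sum to ε,
(ii) the running-time bound equals (1-α)/(αε‖A‖₁)·(Σ √A)², and (iii) this choice
minimizes the running-time bound among all positive thresholds summing to at most ε. -/
theorem edgepush_l1_threshold_optimal
    {V : Type*} [Fintype V] [Nonempty V]
    (A : V → V → ℝ)
    (hsymm : ∀ u v : V, A u v = A v u)
    (hnonneg : ∀ u v : V, 0 ≤ A u v)
    (hdeg : ∀ u : V, 0 < ∑ v, A u v)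
    (α : ℝ) (hα : α ∈ Set.Ioo (0 : ℝ) 1)
    (ε : ℝ) (hε : 0 < ε)
    (Ebar : Finset (V × V))
    (hE : Ebar = Finset.univ.filter fun p : V × V => 0 < A p.1 p.2)
    (normA : ℝ) (hnormA : normA = ∑ u, ∑ v, A u v)
    (θ : V × V → ℝ)
    (hθ : ∀ p ∈ Ebar,
      θ p = ε * Real.sqrt (A p.1 p.2) / ∑ q ∈ Ebar, Real.sqrt (A q.1 q.2)) :
    (∑ p ∈ Ebar, θ p = ε) ∧
    (∑ p ∈ Ebar, (1 - α) * A p.1 p.2 / (α * normA * θ p)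
      = (1 - α) / (α * ε * normA) * (∑ p ∈ Ebar, Real.sqrt (A p.1 p.2)) ^ 2) ∧
    (∀ θ' : V × V → ℝ, (∀ p ∈ Ebar, 0 < θ' p) → (∑ p ∈ Ebar, θ' p) ≤ ε →
      (1 - α) / (α * ε * normA) * (∑ p ∈ Ebar, Real.sqrt (A p.1 p.2)) ^ 2
        ≤ ∑ p ∈ Ebar, (1 - α) * A p.1 p.2 / (α * normA * θ' p)) :=
  edgepush_l1_threshold_optimal_general A hdeg α hα ε hε Ebar hE normA hnormA θ hθ
end

section
/- Fix r_max > 0. For each directed edge (u,v) ∈ Ē define θ(u,v) = r_max·d(v)·√A(u,v) / (Σ_{x∈N(v)} √A(x,v)). Then: (i) for every node v ∈ V, Σ_{u∈N(v)} θ(u,v) = r_max·d(v); (ii) Σ_{(u,v)∈Ē} (1−α)·A(u,v)/(α·‖A‖₁·θ(u,v)) = (1−α)/(α·r_max·‖A‖₁) · Σ_{v∈V} (Σ_{x∈N(v)} √A(x,v))² / d(v); and (iii) this choice is optimal node by node: for every function θ' : Ē → ℝ with θ'(u,v) > 0 for all (u,v) ∈ Ē and Σ_{u∈N(v)} θ'(u,v)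 ≤ r_max·d(v) for every v, one has Σ_{(u,v)∈Ē} (1−α)·A(u,v)/(α·‖A‖₁·θ'(u,v)) ≥ (1−α)/(α·r_max·‖A‖₁) · Σ_{v∈V} (Σ_{x∈N(v)} √A(x,v))² / d(v). -/
open Finset

/-- **EdgePush optimal thresholds for normalized additive error** (Theorem 5.4).
With θ(u,v) = r_max·d(v)·√A(u,v) / Σ_{x∈N(v)} √A(x,v): (i) for each node v the
thresholds of its incoming edges sum to r_max·d(v), (ii) the running-time bound
equals (1-α)/(α·r_max·‖A‖₁)·Σ_v (Σ_{x∈N(v)}√A(x,v))²/d(v), and (iii) this choice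
is optimal among positive thresholds satisfying the node-by-node error constraint. -/
theorem edgepush_additive_threshold_optimal
    {V : Type*} [Fintype V] [Nonempty V]
    (A : V → V → ℝ)
    (hsymm : ∀ u v : V, A u v = A v u)
    (hnonneg : ∀ u v : V, 0 ≤ A u v)
    (d : V → ℝ) (hd : ∀ u, d u = ∑ v, A u v)
    (hdeg : ∀ u : V, 0 < d u)
    (α : ℝ) (hα : α ∈ Set.Ioo (0 : ℝ) 1)
    (rmax : ℝ) (hrmax : 0 < rmax)
    (Ebar : Finset (V × V))
    (hE : Ebar = Finset.univ.filter fun p : V × V => 0 < A p.1 p.2)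
    (N : V → Finset V)
    (hN : ∀ v, N v = Finset.univ.filter fun u => 0 < A u v)
    (normA : ℝ) (hnormA : normA = ∑ u, ∑ v, A u v)
    (θ : V × V → ℝ)
    (hθ : ∀ p ∈ Ebar,
      θ p = rmax * d p.2 * Real.sqrt (A p.1 p.2) / ∑ x ∈ N p.2, Real.sqrt (A x p.2)) :
    (∀ v : V, ∑ u ∈ N v, θ (u, v) = rmax * d v) ∧
    (∑ p ∈ Ebar, (1 - α) * A p.1 p.2 / (α * normA * θ p)
      = (1 - α) / (α * rmax * normA)
          * ∑ v, (∑ x ∈ N v, Real.sqrt (A x v)) ^ 2 / d v) ∧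
    (∀ θ' : V × V → ℝ, (∀ p ∈ Ebar, 0 < θ' p) →
      (∀ v : V, ∑ u ∈ N v, θ' (u, v) ≤ rmax * d v) →
      (1 - α) / (α * rmax * normA)
          * ∑ v, (∑ x ∈ N v, Real.sqrt (A x v)) ^ 2 / d v
        ≤ ∑ p ∈ Ebar, (1 - α) * A p.1 p.2 / (α * normA * θ' p)) := by
  obtain ⟨hα0, hα1⟩ := hα
  have hα1' : 0 < 1 - α := by linarith
  set S : V → ℝ := fun v => ∑ x ∈ N v, Real.sqrt (A x v) with hS
  have hmemN : ∀ u v : V, u ∈ N v ↔ 0 < A u v := by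
    intro u v; simp [hN]
  have hmemE : ∀ u v : V, u ∈ N v → (u, v) ∈ Ebar := by
    intro u v h; rw [hE]; simp [(hmemN u v).mp h]
  -- N v is nonempty
  have hNne : ∀ v, (N v).Nonempty := by
    intro v
    by_contra h
    rw [Finset.not_nonempty_iff_eq_empty] at h
    have : d v = 0 := by
      rw [hd]
      apply Finset.sum_eq_zero
      intro x _
      rw [hsymm]
      by_contra hx
      have : x ∈ N v := (hmemN x v).mpr (lt_of_le_of_ne (hnonneg x v) (Ne.symm hx))
      simp [h] at this
    exact absurd this (ne_of_gt (hdeg v))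
  have hSpos : ∀ v, 0 < S v := by
    intro v
    apply Finset.sum_pos _ (hNne v)
    intro x hx
    exact Real.sqrt_pos.mpr ((hmemN x v).mp hx)
  have hnormApos : 0 < normA := by
    rw [hnormA]
    have : ∀ u : V, 0 < ∑ v, A u v := by
      intro u; rw [← hd u]; exact hdeg u
    exact Finset.sum_pos (fun u _ => this u) Finset.univ_nonempty
  -- part (i)
  have part1 : ∀ v : V, ∑ u ∈ N v, θ (u, v) = rmax * d v := by
    intro v
    have : ∑ u ∈ N v, θ (u, v)
        = ∑ u ∈ N v, rmax * d v * Real.sqrt (A u v) / S v := by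
      apply Finset.sum_congr rfl
      intro u hu
      exact hθ (u, v) (hmemE u v hu)
    rw [this]
    have hSv := (hSpos v).ne'
    rw [← Finset.sum_div, ← Finset.mul_sum]
    show rmax * d v * S v / S v = rmax * d v
    exact mul_div_cancel_right₀ _ hSv
  -- rewriting sums over Ebar
  have key : ∀ F : V × V → ℝ, ∑ p ∈ Ebar, F p = ∑ v, ∑ u ∈ N v, F (u, v) := by
    intro F
    rw [hE, Finset.sum_filter, ← Finset.univ_product_univ, Finset.sum_product_right]
    apply Finset.sum_congr rfl
    intro v _
    rw [hN, Finset.sum_filter]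
  -- part (ii)
  have part2 : ∑ p ∈ Ebar, (1 - α) * A p.1 p.2 / (α * normA * θ p)
      = (1 - α) / (α * rmax * normA) * ∑ v, (S v) ^ 2 / d v := by
    rw [key]
    rw [Finset.mul_sum]
    apply Finset.sum_congr rfl
    intro v _
    have hSv := hSpos v
    have hdv := hdeg v
    have hterm : ∀ u ∈ N v, (1 - α) * A u v / (α * normA * θ (u, v))
        = (1 - α) / (α * rmax * normA) / d v * Real.sqrt (A u v) * S v := by
      intro u hu
      rw [hθ (u, v) (hmemE u v hu)]
      have hA : 0 < A u v := (hmemN u v).mp hu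
      have hsq : 0 < Real.sqrt (A u v) := Real.sqrt_pos.mpr hA
      rw [show (∑ x ∈ N v, Real.sqrt (A x v)) = S v from rfl]
      set s := Real.sqrt (A u v) with hs
      rw [show A u v = s ^ 2 from (Real.sq_sqrt hA.le).symm]
      field_simp
    rw [Finset.sum_congr rfl hterm]
    have : ∑ u ∈ N v, (1 - α) / (α * rmax * normA) / d v * Real.sqrt (A u v) * S v
        = (1 - α) / (α * rmax * normA) / d v * S v * S v := by
      rw [← Finset.sum_mul, ← Finset.mul_sum]
    rw [this]
    field_simp
  refine ⟨part1, part2, ?_⟩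
  -- part (iii)
  intro θ' hθ'pos hθ'sum
  rw [key]
  rw [Finset.mul_sum]
  apply Finset.sum_le_sum
  intro v _
  have hSv := hSpos v
  have hdv := hdeg v
  set T : ℝ := ∑ u ∈ N v, A u v / θ' (u, v) with hT
  have hTnn : 0 ≤ T := by
    apply Finset.sum_nonneg
    intro u hu
    exact div_nonneg (hnonneg u v) (hθ'pos (u, v) (hmemE u v hu)).le
  -- Cauchy-Schwarz
  have hCS : (S v) ^ 2 ≤ (∑ u ∈ N v, θ' (u, v)) * T := by
    have h := Finset.sum_mul_sq_le_sq_mul_sq (N v)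
      (fun u => Real.sqrt (θ' (u, v))) (fun u => Real.sqrt (A u v / θ' (u, v)))
    have heq : ∀ u ∈ N v,
        Real.sqrt (θ' (u, v)) * Real.sqrt (A u v / θ' (u, v)) = Real.sqrt (A u v) := by
      intro u hu
      have hp := hθ'pos (u, v) (hmemE u v hu)
      rw [← Real.sqrt_mul hp.le, mul_div_cancel₀ _ hp.ne']
    have heq2 : ∀ u ∈ N v, Real.sqrt (θ' (u, v)) ^ 2 = θ' (u, v) := by
      intro u hu; exact Real.sq_sqrt (hθ'pos (u, v) (hmemE u v hu)).le
    have heq3 : ∀ u ∈ N v, Real.sqrt (A u v / θ' (u, v)) ^ 2 = A u v / θ' (u, v) := by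
      intro u hu
      exact Real.sq_sqrt (div_nonneg (hnonneg u v) (hθ'pos (u, v) (hmemE u v hu)).le)
    rw [Finset.sum_congr rfl heq, Finset.sum_congr rfl heq2, Finset.sum_congr rfl heq3] at h
    exact h
  have hCS2 : (S v) ^ 2 ≤ rmax * d v * T :=
    hCS.trans (mul_le_mul_of_nonneg_right (hθ'sum v) hTnn)
  have hstep : (S v) ^ 2 / (rmax * d v) ≤ T := by
    rw [div_le_iff₀ (by positivity)]
    linarith [hCS2]
  have hsum : ∑ u ∈ N v, (1 - α) * A u v / (α * normA * θ' (u, v))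
      = (1 - α) / (α * normA) * T := by
    rw [hT, Finset.mul_sum]
    apply Finset.sum_congr rfl
    intro u hu
    rw [div_mul_div_comm]
  rw [hsum]
  have h1 : (1 - α) / (α * rmax * normA) * ((S v) ^ 2 / d v)
      = (1 - α) / (α * normA) * ((S v) ^ 2 / (rmax * d v)) := by
    field_simp
  rw [h1]
  exact mul_le_mul_of_nonneg_left hstep (by positivity)
end

section
/- Suppose π̂, r : V → ℝ satisfy, for every t ∈ V, the invariant π_s(t) = π̂(t) + Σ_{u∈V} r(u)·π_u(t). Fix a node u₀ ∈ V and perform a push on u₀: define π̂' = π̂ + α·r(u₀)·e_{u₀} and r' = r − r(u₀)·e_{u₀} + (1−α)·r(u₀)·(P e_{u₀}), i.e., r'(v) = r(v) − r(u₀)·[v = u₀] + (1−α)·r(u₀)·A(u₀,v)/d(u₀) for every v ∈ V. Then the invariant still holds: for every t ∈ V, π_s(t) = π̂'(t) + Σ_{u∈V} r'(u)·π_u(t). Moreover the invariant holds at the initial stage π̂ = 0, r = e_s. -/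
open Finset

/-- Weighted degree of a node. -/
noncomputable def deg {V : Type*} [Fintype V] (A : V → V → ℝ) (u : V) : ℝ := ∑ v, A u v

/-- Transition matrix `P t v = A t v / d v` (column-stochastic). -/
noncomputable def transP {V : Type*} [Fintype V] (A : V → V → ℝ) : Matrix V V ℝ :=
  Matrix.of fun t v => A t v / deg A v

/-- Single-source personalized PageRank: `π_x = Σ_{ℓ≥0} α(1-α)^ℓ P^ℓ e_x`. -/
noncomputable def ppr {V : Type*} [Fintype V] [DecidableEq V]
    (A : V → V → ℝ) (α : ℝ) (x t : V) : ℝ :=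
  ∑' ℓ : ℕ, α * (1 - α) ^ ℓ * ((transP A ^ ℓ).mulVec (Pi.single x 1)) t

section Aux

variable {V : Type*} [Fintype V] [DecidableEq V] (A : V → V → ℝ)

lemma powP_nonneg (hnonneg : ∀ u v : V, 0 ≤ A u v) (hdeg : ∀ u : V, 0 < deg A u) :
    ∀ (ℓ : ℕ) (t x : V), 0 ≤ (transP A ^ ℓ) t x := by
  intro ℓ
  induction ℓ with
  | zero =>
      intro t x
      simp only [pow_zero, Matrix.one_apply]
      split <;> norm_num
  | succ n ih =>
      intro t x
      rw [pow_succ, Matrix.mul_apply]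
      refine Finset.sum_nonneg fun v _ => mul_nonneg (ih t v) ?_
      exact div_nonneg (hnonneg v x) (hdeg x).le

lemma powP_colsum (hsymm : ∀ u v : V, A u v = A v u) (hdeg : ∀ u : V, 0 < deg A u) :
    ∀ (ℓ : ℕ) (x : V), ∑ t, (transP A ^ ℓ) t x = 1 := by
  have hP : ∀ x : V, ∑ v, (transP A) v x = 1 := by
    intro x
    have : ∑ v, A v x = deg A x := by
      rw [deg]; exact Finset.sum_congr rfl fun v _ => hsymm v x
    simp only [transP, Matrix.of_apply]
    rw [← Finset.sum_div, this, div_self (hdeg x).ne']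
  intro ℓ
  induction ℓ with
  | zero => intro x; simp [Matrix.one_apply]
  | succ n ih =>
      intro x
      simp only [pow_succ, Matrix.mul_apply]
      rw [Finset.sum_comm]
      calc ∑ v, ∑ t, (transP A ^ n) t v * transP A v x
          = ∑ v, (∑ t, (transP A ^ n) t v) * transP A v x := by
            simp [Finset.sum_mul]
        _ = ∑ v, transP A v x := by simp [ih]
        _ = 1 := hP x

lemma powP_le_one (hsymm : ∀ u v : V, A u v = A v u) (hnonneg : ∀ u v : V, 0 ≤ A u v)
    (hdeg : ∀ u : V, 0 < deg A u) (ℓ : ℕ) (t x : V) : (transP A ^ ℓ) t x ≤ 1 := by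
  have h := powP_colsum A hsymm hdeg ℓ x
  calc (transP A ^ ℓ) t x ≤ ∑ t', (transP A ^ ℓ) t' x :=
        Finset.single_le_sum (fun t' _ => powP_nonneg A hnonneg hdeg ℓ t' x) (mem_univ t)
    _ = 1 := h

lemma ppr_summable (hsymm : ∀ u v : V, A u v = A v u) (hnonneg : ∀ u v : V, 0 ≤ A u v)
    (hdeg : ∀ u : V, 0 < deg A u) {α : ℝ} (hα : α ∈ Set.Ioo (0 : ℝ) 1) (t x : V) :
    Summable fun ℓ : ℕ => α * (1 - α) ^ ℓ * (transP A ^ ℓ) t x := by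
  have hgeo : Summable fun ℓ : ℕ => α * (1 - α) ^ ℓ := by
    exact (summable_geometric_of_lt_one (by linarith [hα.2]) (by linarith [hα.1])).mul_left α
  refine Summable.of_nonneg_of_le (fun ℓ => ?_) (fun ℓ => ?_) hgeo
  · exact mul_nonneg (mul_nonneg hα.1.le (pow_nonneg (by linarith [hα.2]) _))
      (powP_nonneg A hnonneg hdeg ℓ t x)
  · have h1 : (transP A ^ ℓ) t x ≤ 1 := powP_le_one A hsymm hnonneg hdeg ℓ t x
    have h0 : 0 ≤ α * (1 - α) ^ ℓ :=
      mul_nonneg hα.1.le (pow_nonneg (by linarith [hα.2]) _)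
    nlinarith

lemma ppr_eq_tsum (α : ℝ) (x t : V) :
    ppr A α x t = ∑' ℓ : ℕ, α * (1 - α) ^ ℓ * (transP A ^ ℓ) t x := by
  unfold ppr
  refine tsum_congr fun ℓ => ?_
  congr 1
  simp [Matrix.mulVec, dotProduct, Pi.single_apply, mul_comm]

lemma ppr_rec (hsymm : ∀ u v : V, A u v = A v u) (hnonneg : ∀ u v : V, 0 ≤ A u v)
    (hdeg : ∀ u : V, 0 < deg A u) {α : ℝ} (hα : α ∈ Set.Ioo (0 : ℝ) 1) (x t : V) :
    ppr A α x t = α * (if t = x then 1 else 0)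
      + (1 - α) * ∑ v, (A x v / deg A x) * ppr A α v t := by
  have hsum : ∀ y : V, Summable fun ℓ : ℕ => α * (1 - α) ^ ℓ * (transP A ^ ℓ) t y :=
    fun y => ppr_summable A hsymm hnonneg hdeg hα t y
  rw [ppr_eq_tsum, Summable.tsum_eq_zero_add (hsum x)]
  have h0 : α * (1 - α) ^ 0 * (transP A ^ 0) t x = α * (if t = x then 1 else 0) := by
    simp [Matrix.one_apply]
  rw [h0]
  congr 1
  have hterm : ∀ ℓ : ℕ, α * (1 - α) ^ (ℓ + 1) * (transP A ^ (ℓ + 1)) t x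
      = ∑ v, ((1 - α) * (A x v / deg A x)) * (α * (1 - α) ^ ℓ * (transP A ^ ℓ) t v) := by
    intro ℓ
    rw [pow_succ (transP A), Matrix.mul_apply, Finset.mul_sum]
    refine Finset.sum_congr rfl fun v _ => ?_
    simp only [transP, Matrix.of_apply]
    rw [hsymm x v]
    ring
  calc (∑' ℓ : ℕ, α * (1 - α) ^ (ℓ + 1) * (transP A ^ (ℓ + 1)) t x)
      = ∑' ℓ : ℕ, ∑ v, ((1 - α) * (A x v / deg A x)) * (α * (1 - α) ^ ℓ * (transP A ^ ℓ) t v) :=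
        tsum_congr hterm
    _ = ∑ v, ∑' ℓ : ℕ, ((1 - α) * (A x v / deg A x)) * (α * (1 - α) ^ ℓ * (transP A ^ ℓ) t v) :=
        Summable.tsum_finsetSum (fun v _ => (hsum v).mul_left _)
    _ = ∑ v, ((1 - α) * (A x v / deg A x)) * ppr A α v t := by
        refine Finset.sum_congr rfl fun v _ => ?_
        rw [tsum_mul_left, ← ppr_eq_tsum]
    _ = (1 - α) * ∑ v, (A x v / deg A x) * ppr A α v t := by
        rw [Finset.mul_sum]; exact Finset.sum_congr rfl fun v _ => by ring

end Aux

/-- **LocalPush invariant (Lemma 2.1)**: the invariant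
`π_s(t) = π̂(t) + Σ_u r(u)·π_u(t)` is preserved by a push operation on a node `u₀`,
and holds at the initial stage `π̂ = 0`, `r = e_s`. -/
theorem localpush_invariant
    {V : Type*} [Fintype V] [DecidableEq V] [Nonempty V]
    (A : V → V → ℝ)
    (hsymm : ∀ u v : V, A u v = A v u)
    (hnonneg : ∀ u v : V, 0 ≤ A u v)
    (hdeg : ∀ u : V, 0 < deg A u)
    (α : ℝ) (hα : α ∈ Set.Ioo (0 : ℝ) 1)
    (s : V)
    (piHat r : V → ℝ)
    (hinv : ∀ t : V, ppr A α s t = piHat t + ∑ u, r u * ppr A α u t)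
    (u₀ : V)
    (piHat' r' : V → ℝ)
    (hpiHat' : ∀ v : V, piHat' v = piHat v + α * r u₀ * (if v = u₀ then 1 else 0))
    (hr' : ∀ v : V, r' v = r v - r u₀ * (if v = u₀ then 1 else 0)
        + (1 - α) * r u₀ * (A u₀ v / deg A u₀)) :
    (∀ t : V, ppr A α s t = piHat' t + ∑ u, r' u * ppr A α u t) ∧
    (∀ t : V, ppr A α s t
        = (0 : ℝ) + ∑ u, (if u = s then (1 : ℝ) else 0) * ppr A α u t) := by
  constructor
  · intro t
    have hk := ppr_rec A hsymm hnonneg hdeg hα u₀ t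
    have hsum' : ∑ u, r' u * ppr A α u t
        = (∑ u, r u * ppr A α u t) - r u₀ * ppr A α u₀ t
          + (1 - α) * r u₀ * ∑ v, (A u₀ v / deg A u₀) * ppr A α v t := by
      have hterm : ∀ u : V, r' u * ppr A α u t
          = r u * ppr A α u t - (r u₀ * if u = u₀ then 1 else 0) * ppr A α u t
            + (1 - α) * r u₀ * ((A u₀ u / deg A u₀) * ppr A α u t) := fun u => by
        rw [hr' u]; ring
      rw [Finset.sum_congr rfl fun u _ => hterm u, Finset.sum_add_distrib,
        Finset.sum_sub_distrib, ← Finset.mul_sum]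
      congr 2
      simp [ite_mul]
    rw [hinv t, hpiHat' t, hsum', hk]
    ring
  · intro t
    simp [ite_mul]
end

section
/- Let r_max ≥ 0 and θ : V × V → ℝ with θ(u,v) ≥ 0 for all pairs. If Σ_{u∈V} θ(u,v) ≤ r_max·d(v) for every node v ∈ V, then for every node t ∈ V, Σ_{(u,v)∈V×V} θ(u,v)·π_v(t) ≤ r_max·d(t). Consequently, if per-edge thresholds satisfy Σ_{u∈N(v)} θ(u,v) ≤ r_max·d(v) for all v, the EdgePush algorithm achieves normalized additive error at most r_max at every node. -/
open Finset

/- The PageRank matrix inherits from `P` two properties: it is column-stochastic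
(`Σ_t π_v(t) = 1`) and reversible with respect to the degrees (`π_v(t)·d(v) = π_t(v)·d(t)`,
since `P(t,v)·d(v) = A(t,v)` is symmetric). Hence
`Σ_{(u,v)} θ(u,v)·π_v(t) ≤ Σ_v r_max·d(v)·π_v(t) = r_max·d(t)·Σ_v π_t(v) = r_max·d(t)`,
and the EdgePush error `π_s(t) - α q(t) = Σ R(u,v)·π_v(t)` lies between `0` and this bound. -/

namespace Matrix

theorem pow_apply_mul_eq_of_detailed_balance {n R : Type*} [Fintype n] [DecidableEq n]
    [CommSemiring R] {M : Matrix n n R} {d : n → R} (hM : ∀ i j, M i j * d j = M j i * d i)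
    (k : ℕ) (i j : n) : (M ^ k) i j * d j = (M ^ k) j i * d i := by
  induction k generalizing i j with
  | zero =>
    rcases eq_or_ne i j with rfl | hij
    · rfl
    · simp [hij, hij.symm]
  | succ k ih =>
    rw [pow_succ, mul_apply, sum_mul, pow_mul_comm', mul_apply, sum_mul]
    refine sum_congr rfl fun l _ => ?_
    calc (M ^ k) i l * M l j * d j = (M ^ k) i l * (M l j * d j) := mul_assoc _ _ _
      _ = M j l * ((M ^ k) i l * d l) := by rw [hM]; ring
      _ = M j l * (M ^ k) l i * d i := by rw [ih]; ring

variable {n : Type*} [Fintype n] [DecidableEq n] {M : Matrix n n ℝ} {α : ℝ}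

theorem summable_geometric_mul_pow_apply (hM : M ∈ colStochastic ℝ n) (hα : α ∈ Set.Ioo 0 1)
    (i j : n) : Summable fun ℓ : ℕ => α * (1 - α) ^ ℓ * (M ^ ℓ) i j := by
  have hpow := pow_mem hM
  have hgeom := (summable_geometric_of_lt_one (r := 1 - α) (sub_nonneg.2 hα.2.le)
    (sub_lt_self 1 hα.1)).mul_left α
  refine hgeom.of_nonneg_of_le (fun ℓ => ?_) (fun ℓ => ?_)
  · exact mul_nonneg (mul_nonneg hα.1.le (pow_nonneg (sub_nonneg.2 hα.2.le) ℓ))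
      (nonneg_of_mem_colStochastic (hpow ℓ))
  · exact mul_le_of_le_one_right (mul_nonneg hα.1.le (pow_nonneg (sub_nonneg.2 hα.2.le) ℓ))
      (le_one_of_mem_colStochastic (hpow ℓ))

theorem tsum_geometric_mul_pow_apply_nonneg (hM : M ∈ colStochastic ℝ n)
    (hα : α ∈ Set.Ioo 0 1) (i j : n) : 0 ≤ ∑' ℓ : ℕ, α * (1 - α) ^ ℓ * (M ^ ℓ) i j :=
  tsum_nonneg fun ℓ => mul_nonneg (mul_nonneg hα.1.le (pow_nonneg (sub_nonneg.2 hα.2.le) ℓ))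
    (nonneg_of_mem_colStochastic (pow_mem hM ℓ))

theorem sum_tsum_geometric_mul_pow_apply (hM : M ∈ colStochastic ℝ n) (hα : α ∈ Set.Ioo 0 1)
    (j : n) : ∑ i, ∑' ℓ : ℕ, α * (1 - α) ^ ℓ * (M ^ ℓ) i j = 1 := by
  rw [← Summable.tsum_finsetSum fun i _ => summable_geometric_mul_pow_apply hM hα i j]
  simp_rw [← mul_sum, sum_col_of_mem_colStochastic (pow_mem hM _), mul_one]
  rw [tsum_mul_left, tsum_geometric_of_lt_one (sub_nonneg.2 hα.2.le) (sub_lt_self 1 hα.1),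
    sub_sub_cancel, mul_inv_cancel₀ hα.1.ne']

end Matrix

open Matrix

section PageRank

variable {V : Type*} [Fintype V] {A : V → V → ℝ}

theorem transP_mem_colStochastic [DecidableEq V] (hsymm : ∀ u v, A u v = A v u)
    (hnonneg : ∀ u v, 0 ≤ A u v) (hdeg : ∀ u, 0 < deg A u) :
    transP A ∈ colStochastic ℝ V := by
  refine mem_colStochastic_iff_sum.2 ⟨fun t v => div_nonneg (hnonneg t v) (hdeg v).le, fun v => ?_⟩
  simp only [transP, of_apply, ← sum_div]
  rw [div_eq_one_iff_eq (hdeg v).ne', deg]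
  exact sum_congr rfl fun t _ => hsymm t v

theorem transP_mul_deg (hdeg : ∀ u, 0 < deg A u) (t v : V) : transP A t v * deg A v = A t v :=
  div_mul_cancel₀ _ (hdeg v).ne'

variable [DecidableEq V] {α : ℝ}

theorem ppr_eq_tsum_pow_apply (x t : V) :
    ppr A α x t = ∑' ℓ : ℕ, α * (1 - α) ^ ℓ * (transP A ^ ℓ) t x := by
  simp only [ppr, mulVec_single_one, col_apply]

theorem ppr_nonneg (hsymm : ∀ u v, A u v = A v u) (hnonneg : ∀ u v, 0 ≤ A u v)
    (hdeg : ∀ u, 0 < deg A u) (hα : α ∈ Set.Ioo 0 1) (x t : V) : 0 ≤ ppr A α x t := by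
  rw [ppr_eq_tsum_pow_apply]
  exact tsum_geometric_mul_pow_apply_nonneg (transP_mem_colStochastic hsymm hnonneg hdeg) hα t x

theorem sum_ppr (hsymm : ∀ u v, A u v = A v u) (hnonneg : ∀ u v, 0 ≤ A u v)
    (hdeg : ∀ u, 0 < deg A u) (hα : α ∈ Set.Ioo 0 1) (x : V) : ∑ t, ppr A α x t = 1 := by
  simp_rw [ppr_eq_tsum_pow_apply]
  exact sum_tsum_geometric_mul_pow_apply (transP_mem_colStochastic hsymm hnonneg hdeg) hα x

theorem ppr_mul_deg_comm (hsymm : ∀ u v, A u v = A v u) (hdeg : ∀ u, 0 < deg A u)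
    (x t : V) : ppr A α x t * deg A x = ppr A α t x * deg A t := by
  have hbalance : ∀ i j, transP A i j * deg A j = transP A j i * deg A i := fun i j => by
    rw [transP_mul_deg hdeg, transP_mul_deg hdeg, hsymm]
  simp only [ppr_eq_tsum_pow_apply, ← tsum_mul_right, mul_assoc,
    pow_apply_mul_eq_of_detailed_balance hbalance]

theorem sum_mul_ppr_le (hsymm : ∀ u v, A u v = A v u) (hnonneg : ∀ u v, 0 ≤ A u v)
    (hdeg : ∀ u, 0 < deg A u) (hα : α ∈ Set.Ioo 0 1) {w : V → ℝ} {r : ℝ}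
    (hw : ∀ v, w v ≤ r * deg A v) (t : V) : ∑ v, w v * ppr A α v t ≤ r * deg A t :=
  calc ∑ v, w v * ppr A α v t
      ≤ ∑ v, r * deg A v * ppr A α v t :=
        sum_le_sum fun v _ =>
          mul_le_mul_of_nonneg_right (hw v) (ppr_nonneg hsymm hnonneg hdeg hα v t)
    _ = r * deg A t * ∑ v, ppr A α t v := by
        rw [mul_sum]
        refine sum_congr rfl fun v _ => ?_
        rw [mul_assoc, mul_comm (deg A v), ppr_mul_deg_comm hsymm hdeg]
        ring
    _ = r * deg A t := by rw [sum_ppr hsymm hnonneg hdeg hα, mul_one]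

end PageRank

theorem edgepush_local_error_constraint_general
    {V : Type*} [Fintype V] [DecidableEq V]
    (A : V → V → ℝ)
    (hsymm : ∀ u v : V, A u v = A v u)
    (hnonneg : ∀ u v : V, 0 ≤ A u v)
    (hdeg : ∀ u : V, 0 < deg A u)
    (α : ℝ) (hα : α ∈ Set.Ioo (0 : ℝ) 1)
    (rmax : ℝ)
    (θ : V → V → ℝ)
    (hcol : ∀ v : V, ∑ u, θ u v ≤ rmax * deg A v) :
    (∀ t : V, ∑ p : V × V, θ p.1 p.2 * ppr A α p.2 t ≤ rmax * deg A t) ∧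
    (∀ s : V, ∀ q : V → ℝ, ∀ R : V → V → ℝ,
      (∀ t : V,
        ppr A α s t = α * q t + ∑ p : V × V, R p.1 p.2 * ppr A α p.2 t) →
      (∀ u v : V, 0 ≤ R u v ∧ R u v ≤ θ u v) →
      ∀ t : V, |ppr A α s t / deg A t - α * q t / deg A t| ≤ rmax) := by
  have hppr := ppr_nonneg hsymm hnonneg hdeg hα
  have hbound : ∀ t, ∑ p : V × V, θ p.1 p.2 * ppr A α p.2 t ≤ rmax * deg A t := fun t => by
    simp only [Fintype.sum_prod_type_right, ← sum_mul]
    exact sum_mul_ppr_le hsymm hnonneg hdeg hα hcol t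
  refine ⟨hbound, fun s q R hinv hR t => ?_⟩
  have hres_nonneg : 0 ≤ ∑ p : V × V, R p.1 p.2 * ppr A α p.2 t :=
    sum_nonneg fun p _ => mul_nonneg (hR p.1 p.2).1 (hppr p.2 t)
  have hres_le : ∑ p : V × V, R p.1 p.2 * ppr A α p.2 t ≤ rmax * deg A t :=
    (sum_le_sum fun p _ => mul_le_mul_of_nonneg_right (hR p.1 p.2).2 (hppr p.2 t)).trans
      (hbound t)
  rw [← sub_div, hinv t, add_sub_cancel_left, abs_of_nonneg (div_nonneg hres_nonneg (hdeg t).le),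
    div_le_iff₀ (hdeg t)]
  exact hres_le

/-- **Local error constraint suffices (Lemma A.6 / Lemma 5.9)**: if the per-edge
thresholds are nonnegative and satisfy `Σ_u θ(u,v) ≤ r_max·d(v)` for every node `v`,
then `Σ_{(u,v)} θ(u,v)·π_v(t) ≤ r_max·d(t)` for every node `t`. Consequently, the
EdgePush algorithm (whose terminal state satisfies the invariant with
`0 ≤ R(u,v) ≤ θ(u,v)`) achieves normalized additive error at most `r_max` at every node. -/
theorem edgepush_local_error_constraint
    {V : Type*} [Fintype V] [DecidableEq V] [Nonempty V]
    (A : V → V → ℝ)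
    (hsymm : ∀ u v : V, A u v = A v u)
    (hnonneg : ∀ u v : V, 0 ≤ A u v)
    (hdeg : ∀ u : V, 0 < deg A u)
    (α : ℝ) (hα : α ∈ Set.Ioo (0 : ℝ) 1)
    (rmax : ℝ) (hrmax : 0 ≤ rmax)
    (θ : V → V → ℝ) (hθ : ∀ u v : V, 0 ≤ θ u v)
    (hcol : ∀ v : V, ∑ u, θ u v ≤ rmax * deg A v) :
    (∀ t : V, ∑ p : V × V, θ p.1 p.2 * ppr A α p.2 t ≤ rmax * deg A t) ∧
    (∀ s : V, ∀ q : V → ℝ, ∀ R : V → V → ℝ,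
      (∀ t : V,
        ppr A α s t = α * q t + ∑ p : V × V, R p.1 p.2 * ppr A α p.2 t) →
      (∀ u v : V, 0 ≤ R u v ∧ R u v ≤ θ u v) →
      ∀ t : V, |ppr A α s t / deg A t - α * q t / deg A t| ≤ rmax) :=
  edgepush_local_error_constraint_general A hsymm hnonneg hdeg α hα rmax θ hcol
end

section
/- Let 0 ≤ a ≤ b ≤ 1 and let v ∈ V be an (a,b)-unbalanced node, i.e., there exists a subset S ⊆ N(v) with |S| = a·n(v) and Σ_{u∈S} A(u,v) = b·d(v). Then Σ_{u∈N(v)} √A(u,v) ≤ (√(a·b) + √((1−a)·(1−b))) · √(n(v)·d(v)). -/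
open Finset

lemma sum_sqrt_le_sqrt_card_mul_sum {V : Type*} (s : Finset V) (f : V → ℝ)
    (hf : ∀ u ∈ s, 0 ≤ f u) :
    ∑ u ∈ s, Real.sqrt (f u) ≤ Real.sqrt ((s.card : ℝ) * ∑ u ∈ s, f u) := by
  have h0 : 0 ≤ ∑ u ∈ s, Real.sqrt (f u) := Finset.sum_nonneg fun u _ => Real.sqrt_nonneg _
  rw [Real.le_sqrt h0]
  swap
  · exact mul_nonneg (Nat.cast_nonneg _) (Finset.sum_nonneg hf)
  calc (∑ u ∈ s, Real.sqrt (f u)) ^ 2 ≤ (s.card : ℝ) * ∑ u ∈ s, Real.sqrt (f u) ^ 2 :=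
        sq_sum_le_card_mul_sum_sq
    _ = (s.card : ℝ) * ∑ u ∈ s, f u := by
        congr 1
        exact Finset.sum_congr rfl fun u hu => Real.sq_sqrt (hf u hu)

/-- **(a,b)-unbalanced node bound (Lemma 5.7)**: if `v` is an `(a,b)`-unbalanced node,
i.e., some subset `S ⊆ N(v)` with `|S| = a·n(v)` carries `Σ_{u∈S} A(u,v) = b·d(v)`
of its weight, then `Σ_{u∈N(v)} √A(u,v) ≤ (√(ab) + √((1−a)(1−b)))·√(n(v)·d(v))`. -/
theorem ab_unbalanced_sqrt_sum_bound
    {V : Type*} [Fintype V] [Nonempty V]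
    (A : V → V → ℝ)
    (hsymm : ∀ u v : V, A u v = A v u)
    (hnonneg : ∀ u v : V, 0 ≤ A u v)
    (d : V → ℝ) (hd : ∀ u, d u = ∑ v, A u v)
    (hdeg : ∀ u : V, 0 < d u)
    (a b : ℝ) (ha : 0 ≤ a) (hab : a ≤ b) (hb : b ≤ 1)
    (v : V)
    (N : Finset V) (hN : N = Finset.univ.filter fun u => 0 < A u v)
    (S : Finset V) (hS : S ⊆ N)
    (hScard : (S.card : ℝ) = a * (N.card : ℝ))
    (hSsum : ∑ u ∈ S, A u v = b * d v) :
    ∑ u ∈ N, Real.sqrt (A u v)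
      ≤ (Real.sqrt (a * b) + Real.sqrt ((1 - a) * (1 - b)))
          * Real.sqrt ((N.card : ℝ) * d v) := by
  classical
  have hdv : 0 < d v := hdeg v
  -- sum over N of A u v equals d v
  have hNsum : ∑ u ∈ N, A u v = d v := by
    rw [hd v, hN, Finset.sum_filter_of_ne]
    · exact Finset.sum_congr rfl fun u _ => (hsymm u v)
    · intro x _ hx
      exact lt_of_le_of_ne (hnonneg x v) (Ne.symm hx)
  have hsplit : N = S ∪ (N \ S) := by rw [Finset.union_sdiff_of_subset hS]
  have hdisj : Disjoint S (N \ S) := Finset.disjoint_sdiff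
  have hcompsum : ∑ u ∈ N \ S, A u v = (1 - b) * d v := by
    have := Finset.sum_union hdisj (f := fun u => A u v)
    rw [← hsplit] at this
    rw [hNsum, hSsum] at this
    linarith
  have hcompcard : ((N \ S).card : ℝ) = (1 - a) * (N.card : ℝ) := by
    rw [Finset.card_sdiff_of_subset hS, Nat.cast_sub (Finset.card_le_card hS), hScard]
    ring
  have h1 : ∑ u ∈ S, Real.sqrt (A u v) ≤ Real.sqrt (a * b) * Real.sqrt ((N.card : ℝ) * d v) := by
    calc ∑ u ∈ S, Real.sqrt (A u v) ≤ Real.sqrt ((S.card : ℝ) * ∑ u ∈ S, A u v) :=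
          sum_sqrt_le_sqrt_card_mul_sum S _ fun u _ => hnonneg u v
      _ = Real.sqrt (a * b) * Real.sqrt ((N.card : ℝ) * d v) := by
          rw [hScard, hSsum, ← Real.sqrt_mul (mul_nonneg ha (ha.trans hab))]
          congr 1; ring
  have h2 : ∑ u ∈ N \ S, Real.sqrt (A u v)
      ≤ Real.sqrt ((1 - a) * (1 - b)) * Real.sqrt ((N.card : ℝ) * d v) := by
    calc ∑ u ∈ N \ S, Real.sqrt (A u v)
        ≤ Real.sqrt (((N \ S).card : ℝ) * ∑ u ∈ N \ S, A u v) :=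
          sum_sqrt_le_sqrt_card_mul_sum _ _ fun u _ => hnonneg u v
      _ = Real.sqrt ((1 - a) * (1 - b)) * Real.sqrt ((N.card : ℝ) * d v) := by
          rw [hcompcard, hcompsum]
          have h1a : 0 ≤ 1 - a := by linarith
          have h1b : 0 ≤ 1 - b := by linarith
          rw [← Real.sqrt_mul (by positivity)]
          congr 1; ring
  calc ∑ u ∈ N, Real.sqrt (A u v)
      = ∑ u ∈ S, Real.sqrt (A u v) + ∑ u ∈ N \ S, Real.sqrt (A u v) := by
        rw [← Finset.sum_union hdisj, ← hsplit]
    _ ≤ (Real.sqrt (a * b) + Real.sqrt ((1 - a) * (1 - b))) * Real.sqrt ((N.card : ℝ) * d v) := by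
        rw [add_mul]; exact add_le_add h1 h2
end

section
/- Let 0 ≤ a ≤ b ≤ 1 and suppose every node v ∈ V is (a,b)-unbalanced. Then for every α ∈ (0,1) and ε > 0, (1−α)/(α·ε·‖A‖₁) · (Σ_{(u,v)∈Ē} √A(u,v))² ≤ (√(a·b) + √((1−a)·(1−b)))² · (2m)/(α·ε). -/
open Finset

/-- **Superiority of EdgePush with ℓ1-error under (a,b)-unbalancedness (Lemma 5.8)**:
if every node of the graph is `(a,b)`-unbalanced, then for all `α ∈ (0,1)` and `ε > 0`,
`(1−α)/(α·ε·‖A‖₁)·(Σ_{(u,v)∈Ē} √A(u,v))² ≤ (√(ab)+√((1−a)(1−b)))²·(2m)/(α·ε)`. -/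
theorem edgepush_superiority_l1_ab_unbalanced
    {V : Type*} [Fintype V] [Nonempty V]
    (A : V → V → ℝ)
    (hsymm : ∀ u v : V, A u v = A v u)
    (hnonneg : ∀ u v : V, 0 ≤ A u v)
    (d : V → ℝ) (hd : ∀ u, d u = ∑ v, A u v)
    (hdeg : ∀ u : V, 0 < d u)
    (a b : ℝ) (ha : 0 ≤ a) (hab : a ≤ b) (hb : b ≤ 1)
    (Ebar : Finset (V × V))
    (hE : Ebar = Finset.univ.filter fun p : V × V => 0 < A p.1 p.2)
    (N : V → Finset V)
    (hN : ∀ v, N v = Finset.univ.filter fun u => 0 < A u v)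
    (normA : ℝ) (hnormA : normA = ∑ u, ∑ v, A u v)
    (m2 : ℝ) (hm2 : m2 = (Ebar.card : ℝ))
    (hunbal : ∀ v : V, ∃ S ⊆ N v,
      (S.card : ℝ) = a * ((N v).card : ℝ) ∧ ∑ u ∈ S, A u v = b * d v) :
    ∀ α ε : ℝ, α ∈ Set.Ioo (0 : ℝ) 1 → 0 < ε →
      (1 - α) / (α * ε * normA) * (∑ p ∈ Ebar, Real.sqrt (A p.1 p.2)) ^ 2
        ≤ (Real.sqrt (a * b) + Real.sqrt ((1 - a) * (1 - b))) ^ 2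
            * (m2 / (α * ε)) := by
  intro α ε hα hε
  classical
  obtain ⟨hα0, hα1⟩ := hα
  set C : ℝ := Real.sqrt (a * b) + Real.sqrt ((1 - a) * (1 - b)) with hC
  have hC0 : 0 ≤ C := by positivity
  have ha1 : a ≤ 1 := hab.trans hb
  have hb0 : 0 ≤ b := ha.trans hab
  -- rewrite sums over Ebar as double sums over neighborhoods
  have hsplit : ∀ f : V → V → ℝ,
      ∑ p ∈ Ebar, f p.1 p.2 = ∑ v, ∑ u ∈ N v, f u v := by
    intro f
    rw [hE, Finset.sum_filter, Fintype.sum_prod_type, Finset.sum_comm]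
    refine Finset.sum_congr rfl fun v _ => ?_
    rw [hN, Finset.sum_filter]
  -- 2m = ∑ v, n(v)
  have hm2' : m2 = ∑ v, ((N v).card : ℝ) := by
    have h1 : (Ebar.card : ℝ) = ∑ p ∈ Ebar, (1 : ℝ) := by simp
    rw [hm2, h1, hsplit (fun _ _ => (1 : ℝ))]
    simp
  -- normA = ∑ v, d v
  have hnormA' : normA = ∑ v, d v := by
    rw [hnormA]; exact (Finset.sum_congr rfl fun u _ => (hd u).symm)
  have hnormA0 : 0 < normA := by
    rw [hnormA']
    exact Finset.sum_pos (fun v _ => hdeg v) Finset.univ_nonempty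
  -- d v = ∑ over neighbors
  have hdN : ∀ v, d v = ∑ u ∈ N v, A u v := by
    intro v
    rw [hd v]
    rw [hN v, Finset.sum_filter]
    rw [show (∑ u, A v u) = ∑ u, A u v from Finset.sum_congr rfl fun u _ => hsymm v u]
    refine Finset.sum_congr rfl fun u _ => ?_
    by_cases h : 0 < A u v
    · simp [h]
    · simp [h, le_antisymm (not_lt.mp h) (hnonneg u v)]
  -- per-node bound
  have hnode : ∀ v, ∑ u ∈ N v, Real.sqrt (A u v)
      ≤ C * Real.sqrt (((N v).card : ℝ) * d v) := by
    intro v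
    obtain ⟨S, hS, hScard, hSsum⟩ := hunbal v
    set n : ℝ := ((N v).card : ℝ) with hn
    have hn0 : 0 ≤ n := Nat.cast_nonneg _
    have hdv0 : 0 ≤ d v := (hdeg v).le
    have hsum_split : ∑ u ∈ N v, Real.sqrt (A u v)
        = ∑ u ∈ S, Real.sqrt (A u v) + ∑ u ∈ N v \ S, Real.sqrt (A u v) := by
      rw [← Finset.sum_sdiff hS]; ring
    have hcs : ∀ (T : Finset V), ∑ u ∈ T, Real.sqrt (A u v)
        ≤ Real.sqrt (T.card : ℝ) * Real.sqrt (∑ u ∈ T, A u v) := by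
      intro T
      have := Real.sum_sqrt_mul_sqrt_le T (f := fun _ => (1 : ℝ))
        (g := fun u => A u v) (fun _ => zero_le_one) (fun u => hnonneg u v)
      simpa using this
    have hcompl_card : ((N v \ S).card : ℝ) = (1 - a) * n := by
      rw [Finset.card_sdiff_of_subset hS, Nat.cast_sub (Finset.card_le_card hS), hScard]
      ring
    have hcompl_sum : ∑ u ∈ N v \ S, A u v = (1 - b) * d v := by
      have := Finset.sum_sdiff hS (f := fun u => A u v)
      rw [← hdN v] at this
      rw [hSsum] at this
      linarith
    have h1 : ∑ u ∈ S, Real.sqrt (A u v)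
        ≤ Real.sqrt (a * b) * Real.sqrt (n * d v) := by
      refine (hcs S).trans ?_
      rw [hScard, hSsum, ← Real.sqrt_mul (by positivity),
        ← Real.sqrt_mul (mul_nonneg ha hb0)]
      apply le_of_eq
      congr 1
      ring
    have h2 : ∑ u ∈ N v \ S, Real.sqrt (A u v)
        ≤ Real.sqrt ((1 - a) * (1 - b)) * Real.sqrt (n * d v) := by
      refine (hcs (N v \ S)).trans ?_
      rw [hcompl_card, hcompl_sum, ← Real.sqrt_mul (mul_nonneg (by linarith) hn0),
        ← Real.sqrt_mul (mul_nonneg (by linarith) (by linarith))]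
      apply le_of_eq
      congr 1
      ring
    rw [hsum_split, hC, add_mul]
    exact add_le_add h1 h2
  -- global Cauchy-Schwarz
  have hglobal : ∑ v, Real.sqrt (((N v).card : ℝ) * d v)
      ≤ Real.sqrt m2 * Real.sqrt normA := by
    have h := Real.sum_sqrt_mul_sqrt_le (Finset.univ : Finset V)
      (f := fun v => ((N v).card : ℝ)) (g := d)
      (fun v => Nat.cast_nonneg _) (fun v => (hdeg v).le)
    rw [hm2', hnormA']
    refine le_trans (le_of_eq ?_) h
    refine Finset.sum_congr rfl fun v _ => ?_
    rw [Real.sqrt_mul (Nat.cast_nonneg _)]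
  -- combine
  have hS0 : 0 ≤ ∑ p ∈ Ebar, Real.sqrt (A p.1 p.2) :=
    Finset.sum_nonneg fun p _ => Real.sqrt_nonneg _
  have hSle : ∑ p ∈ Ebar, Real.sqrt (A p.1 p.2)
      ≤ C * (Real.sqrt m2 * Real.sqrt normA) := by
    rw [hsplit (fun u v => Real.sqrt (A u v))]
    calc ∑ v, ∑ u ∈ N v, Real.sqrt (A u v)
        ≤ ∑ v, C * Real.sqrt (((N v).card : ℝ) * d v) :=
          Finset.sum_le_sum fun v _ => hnode v
      _ = C * ∑ v, Real.sqrt (((N v).card : ℝ) * d v) := by rw [Finset.mul_sum]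
      _ ≤ C * (Real.sqrt m2 * Real.sqrt normA) := by
          exact mul_le_mul_of_nonneg_left hglobal hC0
  have hm20 : 0 ≤ m2 := by rw [hm2]; positivity
  have hsq : (∑ p ∈ Ebar, Real.sqrt (A p.1 p.2)) ^ 2 ≤ C ^ 2 * (m2 * normA) := by
    calc (∑ p ∈ Ebar, Real.sqrt (A p.1 p.2)) ^ 2
        ≤ (C * (Real.sqrt m2 * Real.sqrt normA)) ^ 2 := by
          exact pow_le_pow_left₀ hS0 hSle 2
      _ = C ^ 2 * (m2 * normA) := by
          rw [mul_pow, mul_pow, Real.sq_sqrt hm20, Real.sq_sqrt hnormA0.le]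
  have hden : 0 < α * ε * normA := by positivity
  calc (1 - α) / (α * ε * normA) * (∑ p ∈ Ebar, Real.sqrt (A p.1 p.2)) ^ 2
      ≤ 1 / (α * ε * normA) * (C ^ 2 * (m2 * normA)) := by
        apply mul_le_mul
        · exact (div_le_div_iff_of_pos_right hden).mpr (by linarith)
        · exact hsq
        · positivity
        · positivity
    _ = C ^ 2 * (m2 / (α * ε)) := by
        field_simp
end

section
/- Let 0 ≤ a ≤ b ≤ 1 and suppose every node v ∈ V is (a,b)-unbalanced. Then for every α ∈ (0,1) and r_max > 0, (1−α)/(α·r_max·‖A‖₁) · Σ_{v∈V} (1/d(v))·(Σ_{u∈N(v)} √A(u,v))² ≤ (√(a·b) + √((1−a)·(1−b)))² · (2m)/(α·r_max·‖A‖₁). -/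
open Finset

/-- **Superiority of EdgePush with normalized additive error under
(a,b)-unbalancedness (Lemma 5.9)**: if every node of the graph is `(a,b)`-unbalanced,
then for all `α ∈ (0,1)` and `r_max > 0`,
`(1−α)/(α·r_max·‖A‖₁)·Σ_v (1/d(v))·(Σ_{u∈N(v)} √A(u,v))²
  ≤ (√(ab)+√((1−a)(1−b)))²·(2m)/(α·r_max·‖A‖₁)`. -/
theorem edgepush_superiority_additive_ab_unbalanced
    {V : Type*} [Fintype V] [Nonempty V]
    (A : V → V → ℝ)
    (hsymm : ∀ u v : V, A u v = A v u)
    (hnonneg : ∀ u v : V, 0 ≤ A u v)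
    (d : V → ℝ) (hd : ∀ u, d u = ∑ v, A u v)
    (hdeg : ∀ u : V, 0 < d u)
    (a b : ℝ) (ha : 0 ≤ a) (hab : a ≤ b) (hb : b ≤ 1)
    (N : V → Finset V)
    (hN : ∀ v, N v = Finset.univ.filter fun u => 0 < A u v)
    (normA : ℝ) (hnormA : normA = ∑ u, ∑ v, A u v)
    (m2 : ℝ) (hm2 : m2 = ∑ v, ((N v).card : ℝ))
    (hunbal : ∀ v : V, ∃ S ⊆ N v,
      (S.card : ℝ) = a * ((N v).card : ℝ) ∧ ∑ u ∈ S, A u v = b * d v) :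
    ∀ α rmax : ℝ, α ∈ Set.Ioo (0 : ℝ) 1 → 0 < rmax →
      (1 - α) / (α * rmax * normA)
          * ∑ v, (1 / d v) * (∑ u ∈ N v, Real.sqrt (A u v)) ^ 2
        ≤ (Real.sqrt (a * b) + Real.sqrt ((1 - a) * (1 - b))) ^ 2
            * (m2 / (α * rmax * normA)) := by
  classical
  intro α rmax hα hrmax
  set C := Real.sqrt (a * b) + Real.sqrt ((1 - a) * (1 - b)) with hC
  have hCnn : 0 ≤ C := by positivity
  have hb0 : 0 ≤ b := le_trans ha hab
  have ha1 : a ≤ 1 := le_trans hab hb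
  have hnormpos : 0 < normA := by
    rw [hnormA]
    have : ∀ u : V, (0:ℝ) < ∑ v, A u v := fun u => (hd u) ▸ hdeg u
    exact Finset.sum_pos (fun u _ => this u) ⟨Classical.arbitrary V, Finset.mem_univ _⟩
  have hKpos : 0 < α * rmax * normA := by
    have := hα.1; positivity
  -- per-vertex key bound
  have key : ∀ v, (1 / d v) * (∑ u ∈ N v, Real.sqrt (A u v)) ^ 2
      ≤ C ^ 2 * ((N v).card : ℝ) := by
    intro v
    obtain ⟨S, hS, hScard, hSsum⟩ := hunbal v
    have hdv := hdeg v
    set n : ℝ := ((N v).card : ℝ) with hn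
    have hn0 : 0 ≤ n := Nat.cast_nonneg _
    have hsumN : ∑ u ∈ N v, A u v = d v := by
      rw [hd v, hN v, Finset.sum_filter]
      rw [Finset.sum_congr rfl (fun u _ => hsymm v u)]
      refine Finset.sum_congr rfl fun u _ => ?_
      by_cases h : 0 < A u v
      · simp [h]
      · simp [h, le_antisymm (not_lt.mp h) (hnonneg u v)]
    -- Cauchy-Schwarz on S
    have cs : ∀ T : Finset V, ∑ u ∈ T, Real.sqrt (A u v)
        ≤ Real.sqrt ((T.card : ℝ) * ∑ u ∈ T, A u v) := by
      intro T
      have h1 : (∑ u ∈ T, Real.sqrt (A u v)) ^ 2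
          ≤ (T.card : ℝ) * ∑ u ∈ T, A u v := by
        have := sq_sum_le_card_mul_sum_sq (s := T) (f := fun u => Real.sqrt (A u v))
        calc (∑ u ∈ T, Real.sqrt (A u v)) ^ 2
            ≤ (T.card : ℝ) * ∑ u ∈ T, Real.sqrt (A u v) ^ 2 := by exact_mod_cast this
          _ = (T.card : ℝ) * ∑ u ∈ T, A u v := by
              congr 1; exact Finset.sum_congr rfl fun u _ => Real.sq_sqrt (hnonneg u v)
      have h2 : 0 ≤ ∑ u ∈ T, Real.sqrt (A u v) :=
        Finset.sum_nonneg fun u _ => Real.sqrt_nonneg _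
      calc ∑ u ∈ T, Real.sqrt (A u v)
          = Real.sqrt ((∑ u ∈ T, Real.sqrt (A u v)) ^ 2) := (Real.sqrt_sq h2).symm
        _ ≤ _ := Real.sqrt_le_sqrt h1
    have hsplit : ∑ u ∈ N v, Real.sqrt (A u v)
        = (∑ u ∈ S, Real.sqrt (A u v)) + ∑ u ∈ N v \ S, Real.sqrt (A u v) :=
 by
      have h0 : ∑ u ∈ N v \ S, Real.sqrt (A u v) + ∑ u ∈ S, Real.sqrt (A u v)
          = ∑ u ∈ N v, Real.sqrt (A u v) := Finset.sum_sdiff hS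
      linarith
    have hccard : ((N v \ S).card : ℝ) = (1 - a) * n := by
      rw [Finset.card_sdiff_of_subset hS]
      have hle : S.card ≤ (N v).card := Finset.card_le_card hS
      push_cast [Nat.cast_sub hle]
      rw [hScard]; ring
    have hcsum : ∑ u ∈ N v \ S, A u v = (1 - b) * d v := by
      have h0 : ∑ u ∈ N v \ S, A u v + ∑ u ∈ S, A u v = ∑ u ∈ N v, A u v :=
        Finset.sum_sdiff hS
      rw [hsumN] at h0
      linarith [hSsum, h0]
    have hT1 : ∑ u ∈ S, Real.sqrt (A u v)
        ≤ Real.sqrt (a * b) * Real.sqrt (n * d v) := by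
      calc ∑ u ∈ S, Real.sqrt (A u v) ≤ Real.sqrt ((S.card : ℝ) * ∑ u ∈ S, A u v) := cs S
        _ = Real.sqrt (a * b * (n * d v)) := by rw [hScard, hSsum]; ring_nf
        _ = Real.sqrt (a * b) * Real.sqrt (n * d v) := Real.sqrt_mul (by positivity) _
    have hT2 : ∑ u ∈ N v \ S, Real.sqrt (A u v)
        ≤ Real.sqrt ((1 - a) * (1 - b)) * Real.sqrt (n * d v) := by
      calc ∑ u ∈ N v \ S, Real.sqrt (A u v)
          ≤ Real.sqrt (((N v \ S).card : ℝ) * ∑ u ∈ N v \ S, A u v) := cs _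
        _ = Real.sqrt ((1 - a) * (1 - b) * (n * d v)) := by rw [hccard, hcsum]; ring_nf
        _ = Real.sqrt ((1 - a) * (1 - b)) * Real.sqrt (n * d v) :=
            Real.sqrt_mul (by nlinarith) _
    have hT : ∑ u ∈ N v, Real.sqrt (A u v) ≤ C * Real.sqrt (n * d v) := by
      rw [hsplit, hC]; nlinarith [hT1, hT2]
    have hTnn : 0 ≤ ∑ u ∈ N v, Real.sqrt (A u v) :=
      Finset.sum_nonneg fun u _ => Real.sqrt_nonneg _
    have hsq : (∑ u ∈ N v, Real.sqrt (A u v)) ^ 2 ≤ C ^ 2 * (n * d v) := by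
      have h2 : (∑ u ∈ N v, Real.sqrt (A u v)) ^ 2 ≤ (C * Real.sqrt (n * d v)) ^ 2 := by
        apply sq_le_sq' <;> nlinarith [hT, hTnn]
      calc (∑ u ∈ N v, Real.sqrt (A u v)) ^ 2 ≤ (C * Real.sqrt (n * d v)) ^ 2 := h2
        _ = C ^ 2 * Real.sqrt (n * d v) ^ 2 := by ring
        _ = C ^ 2 * (n * d v) := by rw [Real.sq_sqrt (mul_nonneg hn0 hdv.le)]
    rw [div_mul_eq_mul_div, div_le_iff₀ hdv]
    calc 1 * (∑ u ∈ N v, Real.sqrt (A u v)) ^ 2 ≤ C ^ 2 * (n * d v) := by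
          rw [one_mul]; exact hsq
      _ = C ^ 2 * n * d v := by ring
  have hsum : ∑ v, (1 / d v) * (∑ u ∈ N v, Real.sqrt (A u v)) ^ 2 ≤ C ^ 2 * m2 := by
    rw [hm2, Finset.mul_sum]
    exact Finset.sum_le_sum fun v _ => key v
  have hsumnn : 0 ≤ ∑ v, (1 / d v) * (∑ u ∈ N v, Real.sqrt (A u v)) ^ 2 :=
    Finset.sum_nonneg fun v _ => mul_nonneg (one_div_nonneg.mpr (hdeg v).le) (sq_nonneg _)
  calc (1 - α) / (α * rmax * normA)
        * ∑ v, (1 / d v) * (∑ u ∈ N v, Real.sqrt (A u v)) ^ 2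
      ≤ 1 / (α * rmax * normA)
        * ∑ v, (1 / d v) * (∑ u ∈ N v, Real.sqrt (A u v)) ^ 2 := by
        apply mul_le_mul_of_nonneg_right _ hsumnn
        exact (div_le_div_iff_of_pos_right hKpos).mpr (by linarith [hα.1])
    _ ≤ 1 / (α * rmax * normA) * (C ^ 2 * m2) := by
        apply mul_le_mul_of_nonneg_left hsum (by positivity)
    _ = C ^ 2 * (m2 / (α * rmax * normA)) := by rw [div_eq_mul_inv, div_eq_mul_inv]; ring
end

section
/- For all nodes u, t ∈ V, the SSPPR values on an undirected weighted graph satisfy the reversibility identity d(u)·π_u(t) = d(t)·π_t(u). -/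
open Finset

lemma pow_entry_rev {V : Type*} [Fintype V] [DecidableEq V]
    (A : V → V → ℝ) (hsymm : ∀ u v : V, A u v = A v u)
    (hdeg : ∀ u : V, deg A u ≠ 0) :
    ∀ ℓ : ℕ, ∀ u t : V,
      deg A u * (transP A ^ ℓ) t u = deg A t * (transP A ^ ℓ) u t := by
  intro ℓ
  induction ℓ with
  | zero =>
    intro u t
    simp only [pow_zero, Matrix.one_apply]
    by_cases h : u = t
    · subst h; simp
    · rw [if_neg h, if_neg (Ne.symm h)]; ring
  | succ n ih =>
    intro u t
    conv_lhs => rw [pow_succ]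
    conv_rhs => rw [pow_succ']
    rw [Matrix.mul_apply, Matrix.mul_apply, Finset.mul_sum, Finset.mul_sum]
    refine Finset.sum_congr rfl fun v _ => ?_
    have ha : ∀ a b : V, transP A a b * deg A b = A a b := fun a b => by
      simp only [transP, Matrix.of_apply]
      exact div_mul_cancel₀ _ (hdeg b)
    calc deg A u * ((transP A ^ n) t v * transP A v u)
        = (transP A ^ n) t v * (transP A v u * deg A u) := by ring
      _ = (transP A ^ n) t v * A v u := by rw [ha]
      _ = A u v * (transP A ^ n) t v := by rw [hsymm u v]; ring
      _ = (transP A u v * deg A v) * (transP A ^ n) t v := by rw [ha]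
      _ = transP A u v * (deg A v * (transP A ^ n) t v) := by ring
      _ = transP A u v * (deg A t * (transP A ^ n) v t) := by rw [ih v t]
      _ = deg A t * (transP A u v * (transP A ^ n) v t) := by ring

/-- **Reversibility of SSPPR on undirected weighted graphs**: for all nodes `u, t`,
`d(u)·π_u(t) = d(t)·π_t(u)`. -/
theorem ppr_reversibility
    {V : Type*} [Fintype V] [DecidableEq V] [Nonempty V]
    (A : V → V → ℝ)
    (hsymm : ∀ u v : V, A u v = A v u)
    (hnonneg : ∀ u v : V, 0 ≤ A u v)
    (hdeg : ∀ u : V, 0 < deg A u)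
    (α : ℝ) (hα : α ∈ Set.Ioo (0 : ℝ) 1) :
    ∀ u t : V, deg A u * ppr A α u t = deg A t * ppr A α t u := by
  intro u t
  unfold ppr
  rw [← tsum_mul_left, ← tsum_mul_left]
  refine tsum_congr fun ℓ => ?_
  have h : ((transP A ^ ℓ).mulVec (Pi.single u 1)) t = (transP A ^ ℓ) t u := by
    simp [Matrix.mulVec, dotProduct, Pi.single_apply]
  have h' : ((transP A ^ ℓ).mulVec (Pi.single t 1)) u = (transP A ^ ℓ) u t := by
    simp [Matrix.mulVec, dotProduct, Pi.single_apply]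
  rw [h, h']
  have key := pow_entry_rev A hsymm (fun v => (hdeg v).ne') ℓ u t
  calc deg A u * (α * (1 - α) ^ ℓ * (transP A ^ ℓ) t u)
      = α * (1 - α) ^ ℓ * (deg A u * (transP A ^ ℓ) t u) := by ring
    _ = α * (1 - α) ^ ℓ * (deg A t * (transP A ^ ℓ) u t) := by rw [key]
    _ = deg A t * (α * (1 - α) ^ ℓ * (transP A ^ ℓ) u t) := by ring
end
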